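/- arXiv:1809.04200 — 7 statements merged into one kernel-verified Lean document; each statement's English description precedes it below -/
import Mathlib

section
/- Let V be a real inner product space of finite dimension n ≥ 2, let φ be a symmetric bilinear form on V, and let λ₁, …, λₙ be the eigenvalues of φ repeated according to multiplicity. Let m and M be, respectively, the minimum and maximum of the set {λᵢλⱼ : i ≠ j}. Then the set of sectional curvature values of R_φ, namely {κ_{R_φ}(x,y) : x, y ∈ V linearly independent}, is exactly the closed interval [m, M]. -/
/-- The canonical algebraic curvature tensor associated to a bilinear form `φ`:
`R_φ(x,y,z,w) = φ(x,w)φ(y,z) − φ(x,z)φ(y,w)`. -/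
def canonCT {V : Type*} (φ : V → V → ℝ) (x y z w : V) : ℝ :=
  φ x w * φ y z - φ x z * φ y w

/-- The sectional curvature of the 2-plane spanned by `x` and `y` with respect to a
curvature tensor `R`: `κ_R(x,y) = R(x,y,y,x)/(⟨x,x⟩⟨y,y⟩ − ⟨x,y⟩²)`. -/
noncomputable def sectCurv {V : Type*} [NormedAddCommGroup V] [InnerProductSpace ℝ V]
    (R : V → V → V → V → ℝ) (x y : V) : ℝ :=
  R x y y x / ((inner ℝ x x : ℝ) * (inner ℝ y y : ℝ) - (inner ℝ x y : ℝ) ^ 2)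

/-!
In an orthonormal eigenbasis `b` the form `φ` is diagonal, and a weighted Lagrange identity writes
both `R_φ(x,y,y,x)` and the Gram determinant `⟨x,x⟩⟨y,y⟩ - ⟨x,y⟩²` (which is `R_φ` for `φ = ⟨·,·⟩`)
as sums over the pairs `i ≠ j` of the squared Plücker coordinates `(xᵢyⱼ - xⱼyᵢ)²` of the plane,
weighted by `λᵢλⱼ` and by `1` respectively. A sectional curvature is therefore a weighted mean of
the products `λᵢλⱼ`, `i ≠ j`, and lies in `[m, M]`.

Conversely, for distinct `p, q, r` the plane spanned by `√s bₚ + √t bᵣ` and `b_q` (with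
`s + t = 1`) has curvature `s λₚλ_q + t λᵣλ_q`, so every interval between two products sharing an
index consists of curvatures. Going through `λᵢλₗ` joins `m = λᵢλⱼ` to `M = λₖλₗ` by two such
intervals.
-/

open Finset RealInnerProductSpace

theorem Finset.sum_offDiag_eq_sum_sum {ι M : Type*} [DecidableEq ι] [AddCommMonoid M]
    (s : Finset ι) {F : ι × ι → M} (hF : ∀ i, F (i, i) = 0) :
    ∑ p ∈ s.offDiag, F p = ∑ i ∈ s, ∑ j ∈ s, F (i, j) := by
  rw [← sum_product', ← diag_union_offDiag, sum_union (disjoint_diag_offDiag s), sum_diag]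
  simp [hF]

theorem Finset.two_mul_weighted_lagrange {ι R : Type*} [DecidableEq ι] [CommRing R]
    (s : Finset ι) (μ f g : ι → R) :
    2 * ((∑ i ∈ s, μ i * f i ^ 2) * (∑ i ∈ s, μ i * g i ^ 2) - (∑ i ∈ s, μ i * (f i * g i)) ^ 2) =
      ∑ p ∈ s.offDiag, μ p.1 * μ p.2 * (f p.1 * g p.2 - f p.2 * g p.1) ^ 2 := by
  rw [sum_offDiag_eq_sum_sum s fun i => by ring]
  have expand : ∀ i j, μ i * μ j * (f i * g j - f j * g i) ^ 2 =
      μ i * f i ^ 2 * (μ j * g j ^ 2) + μ i * g i ^ 2 * (μ j * f j ^ 2)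
        - 2 * (μ i * (f i * g i) * (μ j * (f j * g j))) := fun i j => by ring
  simp only [expand, sum_sub_distrib, sum_add_distrib, ← mul_sum, ← sum_mul]
  ring

section InnerProductSpace

variable {V : Type*} [NormedAddCommGroup V] [InnerProductSpace ℝ V]

theorem linearIndependent_pair_iff_inner {x y : V} :
    LinearIndependent ℝ ![x, y] ↔ 0 < ⟪x, x⟫ * ⟪y, y⟫ - ⟪x, y⟫ ^ 2 := by
  have hdet : (Matrix.gram ℝ ![x, y]).det = ⟪x, x⟫ * ⟪y, y⟫ - ⟪x, y⟫ ^ 2 := by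
    simp [Matrix.det_fin_two, Matrix.gram, real_inner_comm x y, sq]
  rw [← Matrix.posDef_gram_iff_linearIndependent, ← hdet]
  exact ⟨Matrix.PosDef.det_pos, fun h => (Matrix.posSemidef_gram ℝ _).posDef_iff_det_ne_zero.2 h.ne'⟩

theorem sectCurv_canonCT_of_orthonormal (φ : V → V → ℝ) {x y : V} (hx : ⟪x, x⟫ = 1)
    (hy : ⟪y, y⟫ = 1) (hxy : ⟪x, y⟫ = 0) :
    sectCurv (canonCT φ) x y = φ x x * φ y y - φ x y * φ y x := by
  rw [sectCurv, hx, hy, hxy]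
  simp [canonCT]

def sectCurvValues (R : V → V → V → V → ℝ) : Set ℝ :=
  {c | ∃ x y : V, LinearIndependent ℝ ![x, y] ∧ c = sectCurv R x y}

theorem mem_sectCurvValues_of_orthonormal (φ : V → V → ℝ) {x y : V} (hx : ⟪x, x⟫ = 1)
    (hy : ⟪y, y⟫ = 1) (hxy : ⟪x, y⟫ = 0) :
    φ x x * φ y y - φ x y * φ y x ∈ sectCurvValues (canonCT φ) :=
  ⟨x, y, linearIndependent_pair_iff_inner.2 (by rw [hx, hy, hxy]; norm_num),
    (sectCurv_canonCT_of_orthonormal φ hx hy hxy).symm⟩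

variable {ι : Type*} [Fintype ι] [DecidableEq ι]

theorem LinearMap.apply_eq_sum_of_diagonal {φ : V →ₗ[ℝ] V →ₗ[ℝ] ℝ} {b : OrthonormalBasis ι ℝ V}
    {lam : ι → ℝ} (hφ : ∀ i j, φ (b i) (b j) = if i = j then lam i else 0) (x y : V) :
    φ x y = ∑ i, lam i * (b.repr x i * b.repr y i) := by
  rw [← LinearMap.sum_repr_mul_repr_mul b.toBasis b.toBasis x y]
  simp [Finsupp.sum_fintype, hφ, mul_comm, mul_left_comm]

theorem OrthonormalBasis.innerₗ_apply_eq_ite (b : OrthonormalBasis ι ℝ V) (i j : ι) :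
    innerₗ V (b i) (b j) = if i = j then (1 : ι → ℝ) i else 0 := by
  simpa using b.inner_eq_ite i j

noncomputable def OrthonormalBasis.plucker (b : OrthonormalBasis ι ℝ V) (x y : V) (p : ι × ι) : ℝ :=
  b.repr x p.1 * b.repr y p.2 - b.repr x p.2 * b.repr y p.1

theorem two_mul_canonCT_eq_sum_plucker_sq {φ : V →ₗ[ℝ] V →ₗ[ℝ] ℝ} {b : OrthonormalBasis ι ℝ V}
    {lam : ι → ℝ} (hφ : ∀ i j, φ (b i) (b j) = if i = j then lam i else 0) (x y : V) :
    2 * canonCT (fun u v => φ u v) x y y x =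
      ∑ p ∈ univ.offDiag, lam p.1 * lam p.2 * b.plucker x y p ^ 2 := by
  have hsymm : φ y x = φ x y := by
    simp only [LinearMap.apply_eq_sum_of_diagonal hφ, mul_comm (b.repr y _)]
  unfold OrthonormalBasis.plucker
  rw [canonCT, hsymm, ← two_mul_weighted_lagrange]
  simp only [LinearMap.apply_eq_sum_of_diagonal hφ, sq]

theorem OrthonormalBasis.two_mul_gram_eq_sum_plucker_sq (b : OrthonormalBasis ι ℝ V) (x y : V) :
    2 * (⟪x, x⟫ * ⟪y, y⟫ - ⟪x, y⟫ ^ 2) = ∑ p ∈ univ.offDiag, b.plucker x y p ^ 2 := by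
  have h := two_mul_canonCT_eq_sum_plucker_sq b.innerₗ_apply_eq_ite x y
  simpa [canonCT, real_inner_comm x y, sq] using h

theorem OrthonormalBasis.sum_plucker_sq_pos (b : OrthonormalBasis ι ℝ V) {x y : V}
    (hxy : LinearIndependent ℝ ![x, y]) : 0 < ∑ p ∈ univ.offDiag, b.plucker x y p ^ 2 := by
  rw [← b.two_mul_gram_eq_sum_plucker_sq]
  exact mul_pos two_pos (linearIndependent_pair_iff_inner.1 hxy)

section Diagonal

variable {φ : V →ₗ[ℝ] V →ₗ[ℝ] ℝ} {b : OrthonormalBasis ι ℝ V} {lam : ι → ℝ}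

theorem sectCurv_canonCT_eq_centerMass
    (hφ : ∀ i j, φ (b i) (b j) = if i = j then lam i else 0) (x y : V) :
    sectCurv (canonCT fun u v => φ u v) x y =
      univ.offDiag.centerMass (fun p => b.plucker x y p ^ 2) (fun p => lam p.1 * lam p.2) := by
  rw [Finset.centerMass, sectCurv, ← mul_div_mul_left _ _ (two_ne_zero' ℝ),
    two_mul_canonCT_eq_sum_plucker_sq hφ, b.two_mul_gram_eq_sum_plucker_sq]
  simp only [smul_eq_mul, div_eq_inv_mul, mul_comm]

theorem add_mem_sectCurvValues {p q r : ι} (hφ : ∀ i j, φ (b i) (b j) = if i = j then lam i else 0)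
    (hpq : p ≠ q) (hrq : r ≠ q) (hpr : p ≠ r) {s t : ℝ} (hs : 0 ≤ s) (ht : 0 ≤ t) (hst : s + t = 1) :
    s * (lam p * lam q) + t * (lam r * lam q) ∈ sectCurvValues (canonCT fun u v => φ u v) := by
  have hs' := Real.mul_self_sqrt hs
  have ht' := Real.mul_self_sqrt ht
  have hx : ⟪√s • b p + √t • b r, √s • b p + √t • b r⟫ = 1 := by
    simp only [inner_add_left, inner_add_right, real_inner_smul_left, real_inner_smul_right,
      b.inner_eq_ite, hpr, hpr.symm, if_true, if_false]
    linear_combination hs' + ht' + hst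
  have hxy : ⟪√s • b p + √t • b r, b q⟫ = 0 := by
    simp only [inner_add_left, real_inner_smul_left, b.inner_eq_ite, hpq, hrq, if_false]
    ring
  convert mem_sectCurvValues_of_orthonormal (fun u v => φ u v) hx (b.inner_eq_one q) hxy using 1
  simp only [map_add, map_smul, LinearMap.add_apply, LinearMap.smul_apply, hφ, smul_eq_mul,
    hpr, hpr.symm, hpq, hpq.symm, hrq, hrq.symm, if_true, if_false, mul_zero, add_zero, zero_add,
    sub_zero]
  linear_combination (-(lam p * lam q)) * hs' - lam r * lam q * ht'

theorem mul_mem_sectCurvValues {p q : ι} (hφ : ∀ i j, φ (b i) (b j) = if i = j then lam i else 0)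
    (hpq : p ≠ q) : lam p * lam q ∈ sectCurvValues (canonCT fun u v => φ u v) := by
  convert mem_sectCurvValues_of_orthonormal (fun u v => φ u v) (b.inner_eq_one p)
    (b.inner_eq_one q) (b.inner_eq_zero hpq) using 1
  simp [hφ, hpq, hpq.symm]

theorem Icc_subset_sectCurvValues {p q r : ι}
    (hφ : ∀ i j, φ (b i) (b j) = if i = j then lam i else 0) (hpq : p ≠ q) (hrq : r ≠ q) :
    Set.Icc (lam p * lam q) (lam r * lam q) ⊆ sectCurvValues (canonCT fun u v => φ u v) := by
  intro c hc
  obtain rfl | hpr := eq_or_ne p r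
  · rw [le_antisymm hc.2 hc.1]
    exact mul_mem_sectCurvValues hφ hpq
  · rw [← segment_eq_Icc (hc.1.trans hc.2)] at hc
    obtain ⟨s, t, hs, ht, hst, rfl⟩ := hc
    exact add_mem_sectCurvValues hφ hpq hrq hpr hs ht hst

end Diagonal

end InnerProductSpace

theorem Icc_mul_subset_of_Icc_mul_subset {ι : Type*} {lam : ι → ℝ} {S : Set ℝ}
    (hS : ∀ p q r, p ≠ q → r ≠ q → Set.Icc (lam p * lam q) (lam r * lam q) ⊆ S)
    {i j k l : ι} (hij : i ≠ j) (hkl : k ≠ l) : Set.Icc (lam i * lam j) (lam k * lam l) ⊆ S := by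
  rw [mul_comm (lam i) (lam j)]
  obtain rfl | hil := eq_or_ne i l
  · exact hS j i k hij.symm hkl
  · refine Set.Icc_subset_Icc_union_Icc.trans (Set.union_subset (hS j i l hij.symm hil.symm) ?_)
    rw [mul_comm (lam l) (lam i)]
    exact hS i l k hil hkl

theorem sectional_curvature_range_of_canonCT_general
    {V : Type*} [NormedAddCommGroup V] [InnerProductSpace ℝ V]
    {n : ℕ}
    (φ : V →ₗ[ℝ] V →ₗ[ℝ] ℝ)
    (A : V →ₗ[ℝ] V) (hA : ∀ x y : V, φ x y = (inner ℝ (A x) y : ℝ))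
    (b : OrthonormalBasis (Fin n) ℝ V) (lam : Fin n → ℝ)
    (hb : ∀ i, A (b i) = lam i • b i)
    (m M : ℝ)
    (hm : IsLeast {c : ℝ | ∃ i j : Fin n, i ≠ j ∧ c = lam i * lam j} m)
    (hM : IsGreatest {c : ℝ | ∃ i j : Fin n, i ≠ j ∧ c = lam i * lam j} M) :
    {c : ℝ | ∃ x y : V, LinearIndependent ℝ ![x, y] ∧
      c = sectCurv (canonCT (fun u v => φ u v)) x y} = Set.Icc m M := by
  have hφ : ∀ i j, φ (b i) (b j) = if i = j then lam i else 0 := fun i j => by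
    rw [hA, hb, real_inner_smul_left, b.inner_eq_ite]
    simp
  apply subset_antisymm
  · rintro _ ⟨x, y, hxy, rfl⟩
    rw [sectCurv_canonCT_eq_centerMass hφ]
    refine (convex_Icc m M).centerMass_mem (fun _ _ => sq_nonneg _) (b.sum_plucker_sq_pos hxy) ?_
    intro p hp
    have hp' : p.1 ≠ p.2 := (mem_offDiag.1 hp).2.2
    exact ⟨hm.2 ⟨p.1, p.2, hp', rfl⟩, hM.2 ⟨p.1, p.2, hp', rfl⟩⟩
  · obtain ⟨i, j, hij, rfl⟩ := hm.1
    obtain ⟨k, l, hkl, rfl⟩ := hM.1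
    exact Icc_mul_subset_of_Icc_mul_subset
      (fun p q r hpq hrq => Icc_subset_sectCurvValues hφ hpq hrq) hij hkl

/-- The set of sectional curvatures of `R_φ` is exactly `[m, M]` where `m, M` are the
minimum and maximum pairwise products of eigenvalues of `φ`. -/
theorem sectional_curvature_range_of_canonCT
    {V : Type*} [NormedAddCommGroup V] [InnerProductSpace ℝ V] [FiniteDimensional ℝ V]
    {n : ℕ} (hn : 2 ≤ n) (hdim : Module.finrank ℝ V = n)
    (φ : V →ₗ[ℝ] V →ₗ[ℝ] ℝ) (hφsymm : ∀ x y : V, φ x y = φ y x)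
    (A : V →ₗ[ℝ] V) (hA : ∀ x y : V, φ x y = (inner ℝ (A x) y : ℝ))
    (b : OrthonormalBasis (Fin n) ℝ V) (lam : Fin n → ℝ)
    (hb : ∀ i, A (b i) = lam i • b i)
    (m M : ℝ)
    (hm : IsLeast {c : ℝ | ∃ i j : Fin n, i ≠ j ∧ c = lam i * lam j} m)
    (hM : IsGreatest {c : ℝ | ∃ i j : Fin n, i ≠ j ∧ c = lam i * lam j} M) :
    {c : ℝ | ∃ x y : V, LinearIndependent ℝ ![x, y] ∧
      c = sectCurv (canonCT (fun u v => φ u v)) x y} = Set.Icc m M :=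
  sectional_curvature_range_of_canonCT_general φ A hA b lam hb m M hm hM
end

section
/- Let V be a real inner product space of finite dimension n ≥ 2, let φ be a symmetric bilinear form on V, and let λ₁, …, λₙ be the eigenvalues of φ repeated according to multiplicity. Set m = min{λᵢλⱼ : i ≠ j} and M = max{λᵢλⱼ : i ≠ j}. Then for every pair of linearly independent vectors x, y ∈ V, one has m ≤ κ_{R_φ}(x,y) ≤ M. -/
open Finset
open scoped InnerProductSpace

/-!
Expand `x` and `y` in an orthonormal eigenbasis `bᵢ` of `A`, with coordinates `xᵢ`, `yᵢ`.
By the (weighted) Lagrange identity both the Gram determinant `⟨x,x⟩⟨y,y⟩ − ⟨x,y⟩²` and the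
numerator `φ(x,x)φ(y,y) − φ(x,y)φ(y,x)` of the sectional curvature are sums over pairs `(i, j)`
of the same nonnegative quantities `(xᵢyⱼ − xⱼyᵢ)²`, with weights `1` and `λᵢλⱼ` respectively.
The diagonal terms vanish, so the numerator lies between `m` and `M` times the Gram determinant,
which is positive for linearly independent `x`, `y`.
-/

theorem weighted_lagrange_identity {ι R : Type*} [Fintype ι] [CommRing R] (c f g : ι → R) :
    ∑ i, ∑ j, c i * c j * (f i * g j - f j * g i) ^ 2 =
      2 * ((∑ i, c i * (f i * f i)) * (∑ i, c i * (g i * g i))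
        - (∑ i, c i * (f i * g i)) ^ 2) := by
  have expand : ∀ i j, c i * c j * (f i * g j - f j * g i) ^ 2 =
      c i * (f i * f i) * (c j * (g j * g j)) + c j * (f j * f j) * (c i * (g i * g i))
        - 2 * (c i * (f i * g i) * (c j * (f j * g j))) := fun i j => by ring
  simp only [expand, sum_sub_distrib, sum_add_distrib, ← mul_sum, ← sum_mul]
  ring

theorem OrthonormalBasis.inner_apply_eq_sum_of_apply_eq_smul {ι V : Type*} [Fintype ι]
    [NormedAddCommGroup V] [InnerProductSpace ℝ V] (b : OrthonormalBasis ι ℝ V)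
    {A : V →ₗ[ℝ] V} {lam : ι → ℝ} (hb : ∀ i, A (b i) = lam i • b i) (u v : V) :
    ⟪A u, v⟫_ℝ = ∑ i, lam i * (⟪b i, u⟫_ℝ * ⟪b i, v⟫_ℝ) := by
  conv_lhs => rw [← b.sum_repr' u]
  simp only [map_sum, map_smul, hb, sum_inner, real_inner_smul_left]
  exact sum_congr rfl fun i _ => by ring

theorem OrthonormalBasis.two_mul_inner_apply_gram_eq {ι V : Type*} [Fintype ι]
    [NormedAddCommGroup V] [InnerProductSpace ℝ V] (b : OrthonormalBasis ι ℝ V)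
    {A : V →ₗ[ℝ] V} {lam : ι → ℝ} (hb : ∀ i, A (b i) = lam i • b i) (x y : V) :
    2 * (⟪A x, x⟫_ℝ * ⟪A y, y⟫_ℝ - ⟪A x, y⟫_ℝ * ⟪A y, x⟫_ℝ) =
      ∑ i, ∑ j, lam i * lam j * (⟪b i, x⟫_ℝ * ⟪b j, y⟫_ℝ - ⟪b j, x⟫_ℝ * ⟪b i, y⟫_ℝ) ^ 2 := by
  simp only [b.inner_apply_eq_sum_of_apply_eq_smul hb, weighted_lagrange_identity]
  simp_rw [mul_comm (⟪b _, y⟫_ℝ) (⟪b _, x⟫_ℝ), sq]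

theorem OrthonormalBasis.two_mul_inner_gram_eq {ι V : Type*} [Fintype ι]
    [NormedAddCommGroup V] [InnerProductSpace ℝ V] (b : OrthonormalBasis ι ℝ V) (x y : V) :
    2 * (⟪x, x⟫_ℝ * ⟪y, y⟫_ℝ - ⟪x, y⟫_ℝ ^ 2) =
      ∑ i, ∑ j, (⟪b i, x⟫_ℝ * ⟪b j, y⟫_ℝ - ⟪b j, x⟫_ℝ * ⟪b i, y⟫_ℝ) ^ 2 := by
  simpa [sq, real_inner_comm x y] using
    b.two_mul_inner_apply_gram_eq (A := LinearMap.id) (lam := 1) (fun i => by simp) x y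

theorem sum_sum_mul_le_sum_sum_mul_of_offDiag_le {ι R : Type*} [Fintype ι] [Semiring R]
    [PartialOrder R] [IsOrderedRing R] {a a' s : ι → ι → R}
    (hs : ∀ i j, 0 ≤ s i j) (hdiag : ∀ i, s i i = 0) (h : ∀ i j, i ≠ j → a i j ≤ a' i j) :
    ∑ i, ∑ j, a i j * s i j ≤ ∑ i, ∑ j, a' i j * s i j := by
  refine sum_le_sum fun i _ => sum_le_sum fun j _ => ?_
  rcases eq_or_ne i j with rfl | hij
  · simp [hdiag]
  · exact mul_le_mul_of_nonneg_right (h i j hij) (hs i j)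

theorem real_inner_self_mul_inner_self_sub_sq_pos {V : Type*} [NormedAddCommGroup V]
    [InnerProductSpace ℝ V] {x y : V} (h : LinearIndependent ℝ ![x, y]) :
    0 < ⟪x, x⟫_ℝ * ⟪y, y⟫_ℝ - ⟪x, y⟫_ℝ ^ 2 := by
  have := (Matrix.posDef_gram_of_linearIndependent h).det_pos
  rw [Matrix.det_fin_two] at this
  simpa [sq, real_inner_comm] using this

theorem sectional_curvature_bounds_of_canonCT_general
    {V : Type*} [NormedAddCommGroup V] [InnerProductSpace ℝ V]
    {n : ℕ}
    (φ : V →ₗ[ℝ] V →ₗ[ℝ] ℝ)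
    (A : V →ₗ[ℝ] V) (hA : ∀ x y : V, φ x y = (inner ℝ (A x) y : ℝ))
    (b : OrthonormalBasis (Fin n) ℝ V) (lam : Fin n → ℝ)
    (hb : ∀ i, A (b i) = lam i • b i)
    (m M : ℝ)
    (hm : IsLeast {c : ℝ | ∃ i j : Fin n, i ≠ j ∧ c = lam i * lam j} m)
    (hM : IsGreatest {c : ℝ | ∃ i j : Fin n, i ≠ j ∧ c = lam i * lam j} M) :
    ∀ x y : V, LinearIndependent ℝ ![x, y] →
      m ≤ sectCurv (canonCT (fun u v => φ u v)) x y ∧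
      sectCurv (canonCT (fun u v => φ u v)) x y ≤ M := by
  intro x y hxy
  set w : Fin n → Fin n → ℝ :=
    fun i j => (⟪b i, x⟫_ℝ * ⟪b j, y⟫_ℝ - ⟪b j, x⟫_ℝ * ⟪b i, y⟫_ℝ) ^ 2
  have hw : ∀ i j, 0 ≤ w i j := fun i j => sq_nonneg _
  have hw_diag : ∀ i, w i i = 0 := fun i => by simp [w]
  have hgram : 2 * (⟪x, x⟫_ℝ * ⟪y, y⟫_ℝ - ⟪x, y⟫_ℝ ^ 2) = ∑ i, ∑ j, w i j :=
    b.two_mul_inner_gram_eq x y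
  have hnum : 2 * (φ x x * φ y y - φ x y * φ y x) = ∑ i, ∑ j, lam i * lam j * w i j := by
    simp only [hA]
    exact b.two_mul_inner_apply_gram_eq hb x y
  have hpos := real_inner_self_mul_inner_self_sub_sq_pos hxy
  have hlower : m * ∑ i, ∑ j, w i j ≤ ∑ i, ∑ j, lam i * lam j * w i j := by
    simpa only [mul_sum] using sum_sum_mul_le_sum_sum_mul_of_offDiag_le (a := fun _ _ => m)
      hw hw_diag fun i j hij => hm.2 ⟨i, j, hij, rfl⟩
  have hupper : ∑ i, ∑ j, lam i * lam j * w i j ≤ M * ∑ i, ∑ j, w i j := by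
    simpa only [mul_sum] using sum_sum_mul_le_sum_sum_mul_of_offDiag_le (a' := fun _ _ => M)
      hw hw_diag fun i j hij => hM.2 ⟨i, j, hij, rfl⟩
  rw [← hgram, ← hnum] at hlower hupper
  simp only [sectCurv, canonCT]
  exact ⟨(le_div_iff₀ hpos).2 (by linarith), (div_le_iff₀ hpos).2 (by linarith)⟩

/-- Every sectional curvature of `R_φ` lies between the minimum and maximum pairwise
products of eigenvalues of `φ`. -/
theorem sectional_curvature_bounds_of_canonCT
    {V : Type*} [NormedAddCommGroup V] [InnerProductSpace ℝ V] [FiniteDimensional ℝ V]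
    {n : ℕ} (hn : 2 ≤ n) (hdim : Module.finrank ℝ V = n)
    (φ : V →ₗ[ℝ] V →ₗ[ℝ] ℝ) (hφsymm : ∀ x y : V, φ x y = φ y x)
    (A : V →ₗ[ℝ] V) (hA : ∀ x y : V, φ x y = (inner ℝ (A x) y : ℝ))
    (b : OrthonormalBasis (Fin n) ℝ V) (lam : Fin n → ℝ)
    (hb : ∀ i, A (b i) = lam i • b i)
    (m M : ℝ)
    (hm : IsLeast {c : ℝ | ∃ i j : Fin n, i ≠ j ∧ c = lam i * lam j} m)
    (hM : IsGreatest {c : ℝ | ∃ i j : Fin n, i ≠ j ∧ c = lam i * lam j} M) :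
    ∀ x y : V, LinearIndependent ℝ ![x, y] →
      m ≤ sectCurv (canonCT (fun u v => φ u v)) x y ∧
      sectCurv (canonCT (fun u v => φ u v)) x y ≤ M :=
  sectional_curvature_bounds_of_canonCT_general φ A hA b lam hb m M hm hM
end

section
/- Let V be a real inner product space of finite dimension n ≥ 2, let φ be a symmetric bilinear form on V, and let λ₁, …, λₙ be the eigenvalues of φ repeated according to multiplicity. Set M = max{λᵢλⱼ : i ≠ j}. Then M is the maximum of the sectional curvatures of R_φ: κ_{R_φ}(x,y) ≤ M for all linearly independent x, y, and there exist orthonormal vectors x, y ∈ V with κ_{R_φ}(x,y) = M. -/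
/-!
Expand `x` and `y` in an orthonormal eigenbasis of `A`, with coordinates `u` and `v`.
The numerator and the denominator of `κ(x, y)` are then Gram-type expressions, and the weighted
Lagrange identity writes them as `½ ∑ λᵢλⱼ wᵢⱼ²` and `½ ∑ wᵢⱼ²` with `wᵢⱼ = uᵢvⱼ − uⱼvᵢ`.
Since `wᵢᵢ = 0`, only the products `λᵢλⱼ` with `i ≠ j` occur, so the numerator is at most `M`
times the denominator; the maximum is attained on the corresponding pair of eigenvectors.
-/

open Finset InnerProductSpace

section Coordinates

variable {ι : Type*} [Fintype ι]

theorem two_mul_weighted_gram_eq_sum_sq (a u v : ι → ℝ) :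
    2 * ((∑ i, a i * (u i * u i)) * (∑ i, a i * (v i * v i)) -
      (∑ i, a i * (u i * v i)) ^ 2) =
    ∑ i, ∑ j, a i * a j * (u i * v j - u j * v i) ^ 2 := by
  have hUV : (∑ i, a i * (u i * u i)) * (∑ i, a i * (v i * v i)) =
      ∑ i, ∑ j, a i * (u i * u i) * (a j * (v j * v j)) := sum_mul_sum ..
  have hVU : (∑ i, a i * (u i * u i)) * (∑ i, a i * (v i * v i)) =
      ∑ i, ∑ j, a i * (v i * v i) * (a j * (u j * u j)) := by rw [mul_comm, sum_mul_sum]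
  have hUV_sq : (∑ i, a i * (u i * v i)) ^ 2 =
      ∑ i, ∑ j, a i * (u i * v i) * (a j * (u j * v j)) := by rw [sq, sum_mul_sum]
  have hexpand : ∑ i, ∑ j, a i * a j * (u i * v j - u j * v i) ^ 2 =
      ∑ i, ∑ j, (a i * (u i * u i) * (a j * (v j * v j)) +
        a i * (v i * v i) * (a j * (u j * u j)) -
        a i * (u i * v i) * (a j * (u j * v j)) - a i * (u i * v i) * (a j * (u j * v j))) :=
    sum_congr rfl fun i _ => sum_congr rfl fun j _ => by ring
  rw [hexpand]
  simp only [sum_add_distrib, sum_sub_distrib]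
  linarith

theorem weighted_gram_le (a u v : ι → ℝ) {M : ℝ} (hM : ∀ i j, i ≠ j → a i * a j ≤ M) :
    (∑ i, a i * (u i * u i)) * (∑ i, a i * (v i * v i)) - (∑ i, a i * (u i * v i)) ^ 2 ≤
      M * ((∑ i, u i * u i) * (∑ i, v i * v i) - (∑ i, u i * v i) ^ 2) := by
  have h1 := two_mul_weighted_gram_eq_sum_sq (fun _ => 1) u v
  simp only [one_mul] at h1
  have key : ∑ i, ∑ j, a i * a j * (u i * v j - u j * v i) ^ 2 ≤
      M * ∑ i, ∑ j, (u i * v j - u j * v i) ^ 2 := by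
    simp only [mul_sum]
    refine sum_le_sum fun i _ => sum_le_sum fun j _ => ?_
    rcases eq_or_ne i j with rfl | hij
    · simp
    · exact mul_le_mul_of_nonneg_right (hM i j hij) (sq_nonneg _)
  linarith [two_mul_weighted_gram_eq_sum_sq a u v, congrArg (M * ·) h1]

end Coordinates

section InnerProductSpace

variable {V : Type*} [NormedAddCommGroup V] [InnerProductSpace ℝ V]

theorem inner_self_mul_inner_self_sub_sq_pos {x y : V} (h : LinearIndependent ℝ ![x, y]) :
    0 < ⟪x, x⟫_ℝ * ⟪y, y⟫_ℝ - ⟪x, y⟫_ℝ ^ 2 := by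
  have := (Matrix.posDef_gram_of_linearIndependent h).det_pos
  simpa [Matrix.det_fin_two, Matrix.gram_apply, real_inner_comm x y, sq] using this

theorem sectCurv_canonCT_inner_map_of_orthonormal {A : V →ₗ[ℝ] V} {x y : V} {μ ν : ℝ}
    (hxy : Orthonormal ℝ ![x, y]) (hx : A x = μ • x) (hy : A y = ν • y) :
    sectCurv (canonCT fun u v => ⟪A u, v⟫_ℝ) x y = μ * ν := by
  have hxx : ⟪x, x⟫_ℝ = 1 := by simpa using orthonormal_iff_ite.mp hxy 0 0
  have hyy : ⟪y, y⟫_ℝ = 1 := by simpa using orthonormal_iff_ite.mp hxy 1 1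
  have hxy₀ : ⟪x, y⟫_ℝ = 0 := by simpa using orthonormal_iff_ite.mp hxy 0 1
  have hyx₀ : ⟪y, x⟫_ℝ = 0 := by rw [real_inner_comm, hxy₀]
  simp only [sectCurv, canonCT, hx, hy, real_inner_smul_left, hxx, hyy, hxy₀, hyx₀]
  ring

variable {ι : Type*} [Fintype ι] (b : OrthonormalBasis ι ℝ V)

theorem OrthonormalBasis.real_inner_eq_sum (x y : V) :
    ⟪x, y⟫_ℝ = ∑ i, ⟪b i, x⟫_ℝ * ⟪b i, y⟫_ℝ := by
  simp only [← b.sum_inner_mul_inner x y, real_inner_comm x]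

theorem OrthonormalBasis.inner_map_eq_sum_of_apply_eq_smul {A : V →ₗ[ℝ] V} {lam : ι → ℝ}
    (hb : ∀ i, A (b i) = lam i • b i) (x y : V) :
    ⟪A x, y⟫_ℝ = ∑ i, lam i * (⟪b i, x⟫_ℝ * ⟪b i, y⟫_ℝ) := by
  conv_lhs => rw [← b.sum_repr' x]
  simp only [map_sum, map_smul, hb, sum_inner, real_inner_smul_left]
  exact sum_congr rfl fun i _ => by ring

theorem sectCurv_canonCT_inner_map_le {A : V →ₗ[ℝ] V} {lam : ι → ℝ}
    (hb : ∀ i, A (b i) = lam i • b i) {M : ℝ} (hM : ∀ i j, i ≠ j → lam i * lam j ≤ M)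
    {x y : V} (hxy : LinearIndependent ℝ ![x, y]) :
    sectCurv (canonCT fun u v => ⟪A u, v⟫_ℝ) x y ≤ M := by
  have hsymm : ⟪A y, x⟫_ℝ = ⟪A x, y⟫_ℝ := by
    simp only [b.inner_map_eq_sum_of_apply_eq_smul hb]
    exact sum_congr rfl fun i _ => by ring
  rw [sectCurv, div_le_iff₀ (inner_self_mul_inner_self_sub_sq_pos hxy), canonCT, hsymm, ← sq]
  rw [b.real_inner_eq_sum x x, b.real_inner_eq_sum y y, b.real_inner_eq_sum x y]
  simp only [b.inner_map_eq_sum_of_apply_eq_smul hb]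
  exact weighted_gram_le lam _ _ hM

end InnerProductSpace

theorem max_sectional_curvature_of_canonCT_general
    {V : Type*} [NormedAddCommGroup V] [InnerProductSpace ℝ V]
    {n : ℕ}
    (φ : V →ₗ[ℝ] V →ₗ[ℝ] ℝ)
    (A : V →ₗ[ℝ] V) (hA : ∀ x y : V, φ x y = (inner ℝ (A x) y : ℝ))
    (b : OrthonormalBasis (Fin n) ℝ V) (lam : Fin n → ℝ)
    (hb : ∀ i, A (b i) = lam i • b i)
    (M : ℝ)
    (hM : IsGreatest {c : ℝ | ∃ i j : Fin n, i ≠ j ∧ c = lam i * lam j} M) :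
    (∀ x y : V, LinearIndependent ℝ ![x, y] →
      sectCurv (canonCT (fun u v => φ u v)) x y ≤ M) ∧
    (∃ x y : V, Orthonormal ℝ ![x, y] ∧
      sectCurv (canonCT (fun u v => φ u v)) x y = M) := by
  have hφ : (fun u v => φ u v) = fun u v => ⟪A u, v⟫_ℝ := by
    funext u v
    exact hA u v
  obtain ⟨⟨i, j, hij, rfl⟩, hle⟩ := hM
  have hbij : Orthonormal ℝ ![b i, b j] := by simp [b.orthonormal.inner_eq_zero hij]
  rw [hφ]
  exact ⟨fun x y hxy => sectCurv_canonCT_inner_map_le b hb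
      (fun k l hkl => hle ⟨k, l, hkl, rfl⟩) hxy,
    b i, b j, hbij, sectCurv_canonCT_inner_map_of_orthonormal hbij (hb i) (hb j)⟩

/-- The maximum pairwise product `M` of eigenvalues of `φ` is the maximum sectional
curvature of `R_φ`, and it is attained on an orthonormal pair. -/
theorem max_sectional_curvature_of_canonCT
    {V : Type*} [NormedAddCommGroup V] [InnerProductSpace ℝ V] [FiniteDimensional ℝ V]
    {n : ℕ} (hn : 2 ≤ n) (hdim : Module.finrank ℝ V = n)
    (φ : V →ₗ[ℝ] V →ₗ[ℝ] ℝ) (hφsymm : ∀ x y : V, φ x y = φ y x)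
    (A : V →ₗ[ℝ] V) (hA : ∀ x y : V, φ x y = (inner ℝ (A x) y : ℝ))
    (b : OrthonormalBasis (Fin n) ℝ V) (lam : Fin n → ℝ)
    (hb : ∀ i, A (b i) = lam i • b i)
    (M : ℝ)
    (hM : IsGreatest {c : ℝ | ∃ i j : Fin n, i ≠ j ∧ c = lam i * lam j} M) :
    (∀ x y : V, LinearIndependent ℝ ![x, y] →
      sectCurv (canonCT (fun u v => φ u v)) x y ≤ M) ∧
    (∃ x y : V, Orthonormal ℝ ![x, y] ∧
      sectCurv (canonCT (fun u v => φ u v)) x y = M) :=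
  max_sectional_curvature_of_canonCT_general φ A hA b lam hb M hM
end

section
/- Let V = ℝ³ with the standard inner product, and define symmetric bilinear forms φ₁ and φ₂ on V by φ₁(x,y) = x₁y₁ + x₂y₂ and φ₂(x,y) = x₁y₁ + x₃y₃. Then every sectional curvature of R = R_{φ₁} + R_{φ₂} is strictly less than 2: for all linearly independent x, y ∈ V, κ_R(x,y) < 2. -/
/-!
`R_{φ₁}(x,y,y,x)` and `R_{φ₂}(x,y,y,x)` are the squared Plücker coordinates `p₁₂²` and `p₁₃²`
of the plane `x ∧ y`, while by Lagrange's identity its Gram determinant is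
`p₁₂² + p₁₃² + p₂₃²`. Hence every sectional curvature of `R_{φ₁} + R_{φ₂}` is at most `1`.
-/

open scoped RealInnerProductSpace

theorem sectCurv_le_one_of_le_gram {V : Type*} [NormedAddCommGroup V] [InnerProductSpace ℝ V]
    (R : V → V → V → V → ℝ) (x y : V) (hR : R x y y x ≤ ⟪x, x⟫ * ⟪y, y⟫ - ⟪x, y⟫ ^ 2) :
    sectCurv R x y ≤ 1 :=
  div_le_one_of_le₀ hR <| sub_nonneg.2 <| by
    simpa only [sq, real_inner_comm] using real_inner_mul_inner_self_le x y

theorem canonCT_coordinatePlane_self {ι : Type*} (i j : ι) (x y : EuclideanSpace ℝ ι) :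
    canonCT (fun u v : EuclideanSpace ℝ ι => u i * v i + u j * v j) x y y x =
      (x i * y j - x j * y i) ^ 2 := by
  unfold canonCT
  ring

theorem EuclideanSpace.gram_det_eq_sum_sq_fin_three (x y : EuclideanSpace ℝ (Fin 3)) :
    ⟪x, x⟫ * ⟪y, y⟫ - ⟪x, y⟫ ^ 2 =
      (x 0 * y 1 - x 1 * y 0) ^ 2 + (x 0 * y 2 - x 2 * y 0) ^ 2 +
        (x 1 * y 2 - x 2 * y 1) ^ 2 := by
  simp only [PiLp.inner_apply, Fin.sum_univ_three, RCLike.inner_apply, conj_trivial]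
  ring

/-- For `φ₁(x,y) = x₁y₁ + x₂y₂` and `φ₂(x,y) = x₁y₁ + x₃y₃` on `ℝ³`, every sectional
curvature of `R_{φ₁} + R_{φ₂}` is strictly less than `2`. -/
theorem sectional_curvature_sum_lt_two :
    ∀ x y : EuclideanSpace ℝ (Fin 3), LinearIndependent ℝ ![x, y] →
      sectCurv (fun a b c d =>
        canonCT (fun u v : EuclideanSpace ℝ (Fin 3) => u 0 * v 0 + u 1 * v 1) a b c d +
        canonCT (fun u v : EuclideanSpace ℝ (Fin 3) => u 0 * v 0 + u 2 * v 2) a b c d)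
        x y < 2 := by
  intro x y _
  refine lt_of_le_of_lt (sectCurv_le_one_of_le_gram _ x y ?_) one_lt_two
  rw [canonCT_coordinatePlane_self, canonCT_coordinatePlane_self,
    EuclideanSpace.gram_det_eq_sum_sq_fin_three]
  exact le_add_of_nonneg_right (sq_nonneg _)
end

section
/- Let V be a real inner product space of finite dimension n ≥ 3 and let φ be a symmetric bilinear form on V with associated self-adjoint operator A. If every sectional curvature of R_φ is nonpositive, i.e., κ_{R_φ}(x,y) ≤ 0 for all linearly independent x, y ∈ V, then 0 is an eigenvalue of A: there exists a nonzero vector v ∈ V with A v = 0. -/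
lemma eq_zero_or_eq_zero_or_eq_zero_of_mul_nonpos {a b c : ℝ}
    (hab : a * b ≤ 0) (hac : a * c ≤ 0) (hbc : b * c ≤ 0) : a = 0 ∨ b = 0 ∨ c = 0 := by
  have hsq : (a * b * c) ^ 2 = 0 := by
    refine le_antisymm ?_ (sq_nonneg _)
    calc (a * b * c) ^ 2 = (a * b) * (a * c) * (b * c) := by ring
      _ ≤ 0 := mul_nonpos_of_nonneg_of_nonpos (mul_nonneg_of_nonpos_of_nonpos hab hac) hbc
  simpa [or_assoc] using hsq

namespace Orthonormal

variable {𝕜 V : Type*} [RCLike 𝕜] [NormedAddCommGroup V] [InnerProductSpace 𝕜 V]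

lemma pair {ι : Type*} {v : ι → V} (hv : Orthonormal 𝕜 v) {i j : ι} (hij : i ≠ j) :
    Orthonormal 𝕜 ![v i, v j] := by
  have : ![v i, v j] = v ∘ ![i, j] := by
    funext k
    fin_cases k <;> rfl
  rw [this]
  exact hv.comp _ (injective_pair_iff_ne.mpr hij)

lemma inner_pair {x y : V} (hxy : Orthonormal 𝕜 ![x, y]) :
    inner 𝕜 x x = (1 : 𝕜) ∧ inner 𝕜 y y = (1 : 𝕜) ∧ inner 𝕜 x y = (0 : 𝕜) := by
  have h := orthonormal_iff_ite.mp hxy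
  exact ⟨by simpa using h 0 0, by simpa using h 1 1, by simpa using h 0 1⟩

end Orthonormal

section SectionalCurvature

variable {V : Type*} [NormedAddCommGroup V] [InnerProductSpace ℝ V]


lemma sectCurv_of_orthonormal (R : V → V → V → V → ℝ) {x y : V}
    (hxy : Orthonormal ℝ ![x, y]) : sectCurv R x y = R x y y x := by
  obtain ⟨hx, hy, hxy⟩ := hxy.inner_pair
  rw [sectCurv, hx, hy, hxy]
  norm_num

lemma sectCurv_canonCT_of_orthonormal_eigenvectors {A : V →ₗ[ℝ] V} {x y : V} {a b : ℝ}
    (hxy : Orthonormal ℝ ![x, y]) (hx : A x = a • x) (hy : A y = b • y) :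
    sectCurv (canonCT fun u v => (inner ℝ (A u) v : ℝ)) x y = a * b := by
  obtain ⟨hx1, hy1, hxy0⟩ := hxy.inner_pair
  have hyx0 : (inner ℝ y x : ℝ) = 0 := by rw [real_inner_comm, hxy0]
  rw [sectCurv_of_orthonormal _ hxy, canonCT, hx, hy]
  simp only [real_inner_smul_left, hx1, hy1, hxy0, hyx0]
  ring

end SectionalCurvature

/-- If all sectional curvatures of `R_φ` are nonpositive on a space of dimension at
least 3, then `0` is an eigenvalue of the associated self-adjoint operator. -/
theorem zero_eigenvalue_of_nonpos_sectional_curvature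
    {V : Type*} [NormedAddCommGroup V] [InnerProductSpace ℝ V] [FiniteDimensional ℝ V]
    {n : ℕ} (hn : 3 ≤ n) (hdim : Module.finrank ℝ V = n)
    (φ : V →ₗ[ℝ] V →ₗ[ℝ] ℝ) (hφsymm : ∀ x y : V, φ x y = φ y x)
    (A : V →ₗ[ℝ] V) (hA : ∀ x y : V, φ x y = (inner ℝ (A x) y : ℝ))
    (hnonpos : ∀ x y : V, LinearIndependent ℝ ![x, y] →
      sectCurv (canonCT (fun u v => φ u v)) x y ≤ 0) :
    ∃ v : V, v ≠ 0 ∧ A v = 0 := by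
  have hT : A.IsSymmetric := fun x y => by rw [← hA, hφsymm, hA, real_inner_comm]
  set e := hT.eigenvectorBasis hdim
  set μ := hT.eigenvalues hdim
  simp only [hA] at hnonpos
  have heig : ∀ i, A (e i) = μ i • e i := fun i => by
    simpa only [RCLike.ofReal_real_eq_id, id] using hT.apply_eigenvectorBasis hdim i
  have hμ : ∀ i j, i ≠ j → μ i * μ j ≤ 0 := fun i j hij => by
    have he := e.orthonormal.pair hij
    rw [← sectCurv_canonCT_of_orthonormal_eigenvectors he (heig i) (heig j)]
    exact hnonpos _ _ he.linearIndependent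
  obtain ⟨k, hk⟩ : ∃ k, μ k = 0 := by
    rcases eq_zero_or_eq_zero_or_eq_zero_of_mul_nonpos
      (hμ ⟨0, by omega⟩ ⟨1, by omega⟩ (by simp [Fin.ext_iff]))
      (hμ ⟨0, by omega⟩ ⟨2, by omega⟩ (by simp [Fin.ext_iff]))
      (hμ ⟨1, by omega⟩ ⟨2, by omega⟩ (by simp [Fin.ext_iff])) with h | h | h
    exacts [⟨_, h⟩, ⟨_, h⟩, ⟨_, h⟩]
  exact ⟨e k, e.orthonormal.ne_zero k, by rw [heig k, hk, zero_smul]⟩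
end

section
/- Let V be a real inner product space of finite dimension n ≥ 2 and let φ be a symmetric bilinear form on V with associated self-adjoint operator A. Suppose every sectional curvature of R_φ is nonnegative, i.e., κ_{R_φ}(x,y) ≥ 0 for all linearly independent x, y ∈ V, and that some pair of linearly independent vectors x₀, y₀ satisfies κ_{R_φ}(x₀,y₀) = 0. Then 0 is an eigenvalue of A: there exists a nonzero vector v ∈ V with A v = 0. -/
namespace LinearMap.BilinForm

variable {R M : Type*} [CommRing R] [LinearOrder R] [IsStrictOrderedRing R]
  [AddCommGroup M] [Module R M] (B : LinearMap.BilinForm R M)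

lemma forall_nonneg_or_forall_nonpos_of_apply_sq_le
    (h : ∀ x y, B x y ^ 2 ≤ B x x * B y y) : (∀ x, 0 ≤ B x x) ∨ ∀ x, B x x ≤ 0 := by
  by_contra! ⟨⟨x, hx⟩, ⟨y, hy⟩⟩
  nlinarith [h x y, sq_nonneg (B x y)]

lemma exists_ne_zero_apply_eq_zero_of_apply_sq_eq (hs : ∀ x, 0 ≤ B x x)
    (hB : LinearMap.IsSymm B) {x y : M} (hli : LinearIndependent R ![x, y])
    (he : B x y ^ 2 = B x x * B y y) : ∃ v ≠ 0, B v = 0 := by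
  by_contra! hker
  have hpos : ∀ v, v ≠ 0 → 0 < B v v := fun v hv =>
    (hs v).lt_of_ne' fun h => hker v hv ((B.apply_apply_same_eq_zero_iff hs hB).mp h)
  refine B.not_linearIndependent_of_apply_mul_apply_eq hpos x y ?_ hli
  rw [← hB.eq x y, RingHom.id_apply, ← sq, he]

lemma exists_ne_zero_apply_eq_zero_of_apply_sq_le (hB : LinearMap.IsSymm B)
    (h : ∀ x y, B x y ^ 2 ≤ B x x * B y y) {x y : M} (hli : LinearIndependent R ![x, y])
    (he : B x y ^ 2 = B x x * B y y) : ∃ v ≠ 0, B v = 0 := by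
  rcases B.forall_nonneg_or_forall_nonpos_of_apply_sq_le h with hs | hs
  · exact B.exists_ne_zero_apply_eq_zero_of_apply_sq_eq hs hB hli he
  · obtain ⟨v, hv, hBv⟩ := (-B).exists_ne_zero_apply_eq_zero_of_apply_sq_eq
      (fun x => by simpa using hs x) ⟨fun x y => by simp [← hB.eq x y]⟩ hli (by simpa using he)
    exact ⟨v, hv, neg_eq_zero.mp hBv⟩

end LinearMap.BilinForm

lemma canonCT_apply_self {V : Type*} (φ : V → V → ℝ) (x y : V) :
    canonCT φ x y y x = φ x x * φ y y - φ x y * φ y x := rfl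

section SectionalCurvature

variable {V : Type*} [NormedAddCommGroup V] [InnerProductSpace ℝ V]

lemma gram_pos_of_linearIndependent {x y : V} (h : LinearIndependent ℝ ![x, y]) :
    0 < (inner ℝ x x : ℝ) * (inner ℝ y y : ℝ) - (inner ℝ x y : ℝ) ^ 2 := by
  have hpos : ∀ v : V, v ≠ 0 → 0 < innerₗ V v v := fun v hv => real_inner_self_pos.mpr hv
  have hne : (inner ℝ x y : ℝ) * inner ℝ y x ≠ inner ℝ x x * inner ℝ y y := fun he =>
    LinearMap.BilinForm.not_linearIndependent_of_apply_mul_apply_eq _ hpos x y he h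
  rw [real_inner_comm x y] at hne
  rw [sq]
  exact sub_pos.mpr (lt_of_le_of_ne (real_inner_mul_inner_self_le x y) hne)

lemma sectCurv_nonneg_iff (R : V → V → V → V → ℝ) {x y : V}
    (h : LinearIndependent ℝ ![x, y]) : 0 ≤ sectCurv R x y ↔ 0 ≤ R x y y x := by
  rw [sectCurv, le_div_iff₀ (gram_pos_of_linearIndependent h), zero_mul]

lemma sectCurv_eq_zero_iff (R : V → V → V → V → ℝ) {x y : V}
    (h : LinearIndependent ℝ ![x, y]) : sectCurv R x y = 0 ↔ R x y y x = 0 :=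
  div_eq_zero_iff.trans (or_iff_left (gram_pos_of_linearIndependent h).ne')

lemma apply_sq_le_of_sectCurv_canonCT_nonneg (B : LinearMap.BilinForm ℝ V)
    (hB : LinearMap.IsSymm B)
    (h : ∀ x y : V, LinearIndependent ℝ ![x, y] → 0 ≤ sectCurv (canonCT fun u v => B u v) x y)
    (x y : V) : B x y ^ 2 ≤ B x x * B y y := by
  by_cases hli : LinearIndependent ℝ ![x, y]
  · have := (sectCurv_nonneg_iff _ hli).mp (h x y hli)
    rw [canonCT_apply_self, ← hB.eq x y, RingHom.id_apply] at this
    linarith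
  · rw [linearIndependent_fin2] at hli
    simp only [Matrix.cons_val_one, Matrix.cons_val_zero, not_and_or, not_forall, not_not] at hli
    obtain rfl | ⟨a, rfl⟩ := hli
    · simp
    · simp only [map_smul, LinearMap.smul_apply, smul_eq_mul]
      nlinarith

end SectionalCurvature

theorem zero_eigenvalue_of_nonneg_sectional_curvature_with_zero_general
    {V : Type*} [NormedAddCommGroup V] [InnerProductSpace ℝ V]
    (φ : V →ₗ[ℝ] V →ₗ[ℝ] ℝ) (hφsymm : ∀ x y : V, φ x y = φ y x)
    (A : V →ₗ[ℝ] V) (hA : ∀ x y : V, φ x y = (inner ℝ (A x) y : ℝ))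
    (hnonneg : ∀ x y : V, LinearIndependent ℝ ![x, y] →
      0 ≤ sectCurv (canonCT (fun u v => φ u v)) x y)
    (x₀ y₀ : V) (hli : LinearIndependent ℝ ![x₀, y₀])
    (hzero : sectCurv (canonCT (fun u v => φ u v)) x₀ y₀ = 0) :
    ∃ v : V, v ≠ 0 ∧ A v = 0 := by
  have hsymm : LinearMap.IsSymm φ := ⟨hφsymm⟩
  have hflat : φ x₀ y₀ ^ 2 = φ x₀ x₀ * φ y₀ y₀ := by
    have := (sectCurv_eq_zero_iff _ hli).mp hzero
    rw [canonCT_apply_self, ← hφsymm x₀ y₀] at this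
    linear_combination -this
  obtain ⟨v, hv, hφv⟩ := LinearMap.BilinForm.exists_ne_zero_apply_eq_zero_of_apply_sq_le φ hsymm
    (apply_sq_le_of_sectCurv_canonCT_nonneg φ hsymm hnonneg) hli hflat
  refine ⟨v, hv, inner_self_eq_zero (𝕜 := ℝ) |>.mp ?_⟩
  rw [← hA, hφv, LinearMap.zero_apply]

/-- If all sectional curvatures of `R_φ` are nonnegative and some sectional curvature
vanishes, then `0` is an eigenvalue of the associated self-adjoint operator. -/
theorem zero_eigenvalue_of_nonneg_sectional_curvature_with_zero
    {V : Type*} [NormedAddCommGroup V] [InnerProductSpace ℝ V] [FiniteDimensional ℝ V]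
    {n : ℕ} (hn : 2 ≤ n) (hdim : Module.finrank ℝ V = n)
    (φ : V →ₗ[ℝ] V →ₗ[ℝ] ℝ) (hφsymm : ∀ x y : V, φ x y = φ y x)
    (A : V →ₗ[ℝ] V) (hA : ∀ x y : V, φ x y = (inner ℝ (A x) y : ℝ))
    (hnonneg : ∀ x y : V, LinearIndependent ℝ ![x, y] →
      0 ≤ sectCurv (canonCT (fun u v => φ u v)) x y)
    (x₀ y₀ : V) (hli : LinearIndependent ℝ ![x₀, y₀])
    (hzero : sectCurv (canonCT (fun u v => φ u v)) x₀ y₀ = 0) :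
    ∃ v : V, v ≠ 0 ∧ A v = 0 :=
  zero_eigenvalue_of_nonneg_sectional_curvature_with_zero_general φ hφsymm A hA hnonneg x₀ y₀ hli
    hzero
end

section
/- For every pair of real numbers a ≤ b with b ≥ 0, there exists a symmetric bilinear form φ on ℝ³ (with the standard inner product) such that the set of sectional curvature values of R_φ, namely {κ_{R_φ}(x,y) : x, y linearly independent}, is exactly the closed interval [a, b]. -/
open Matrix Set

def sectCurvSet {V : Type*} [NormedAddCommGroup V] [InnerProductSpace ℝ V]
    (φ : V →ₗ[ℝ] V →ₗ[ℝ] ℝ) : Set ℝ :=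
  {c | ∃ x y : V, LinearIndependent ℝ ![x, y] ∧ c = sectCurv (canonCT fun u v => φ u v) x y}

lemma canonCT_apply_of_symm {V : Type*} {φ : V → V → ℝ} (hφ : ∀ x y, φ x y = φ y x) (x y : V) :
    canonCT φ x y y x = φ x x * φ y y - φ x y ^ 2 := by
  rw [canonCT, hφ y x]; ring

lemma EuclideanSpace.linearIndependent_pair_iff_cross_ne_zero {𝕜 : Type*} [RCLike 𝕜]
    {x y : EuclideanSpace 𝕜 (Fin 3)} :
    LinearIndependent 𝕜 ![x, y] ↔ x.ofLp ⨯₃ y.ofLp ≠ 0 := by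
  rw [crossProduct_ne_zero_iff_linearIndependent,
    ← (WithLp.linearEquiv 2 𝕜 (Fin 3 → 𝕜)).toLinearMap.linearIndependent_iff (LinearEquiv.ker _)]
  congr! 1
  ext i; fin_cases i <;> rfl

section DiagForm

variable {ι : Type*} [Fintype ι]

noncomputable def diagForm (l : ι → ℝ) : EuclideanSpace ℝ ι →ₗ[ℝ] EuclideanSpace ℝ ι →ₗ[ℝ] ℝ :=
  LinearMap.mk₂ ℝ (fun u v => ∑ i, l i * u i * v i)
    (fun _ _ _ => by simp only [PiLp.add_apply, ← Finset.sum_add_distrib, mul_add, add_mul])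
    (fun _ _ _ => by
      simp only [PiLp.smul_apply, smul_eq_mul, Finset.mul_sum]
      exact Finset.sum_congr rfl fun _ _ => by ring)
    (fun _ _ _ => by simp only [PiLp.add_apply, ← Finset.sum_add_distrib, mul_add])
    (fun _ _ _ => by
      simp only [PiLp.smul_apply, smul_eq_mul, Finset.mul_sum]
      exact Finset.sum_congr rfl fun _ _ => by ring)

lemma diagForm_apply (l : ι → ℝ) (u v : EuclideanSpace ℝ ι) :
    diagForm l u v = ∑ i, l i * u i * v i := rfl

lemma diagForm_comm (l : ι → ℝ) (u v : EuclideanSpace ℝ ι) : diagForm l u v = diagForm l v u := by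
  simp only [diagForm_apply, mul_right_comm]

lemma inner_eq_diagForm_one (u v : EuclideanSpace ℝ ι) : inner ℝ u v = diagForm 1 u v := by
  simp [diagForm_apply, PiLp.inner_apply, mul_comm]

end DiagForm

/-- Indexed like the cross product: entry `i` is the sectional curvature of `diagForm l` on the
coordinate plane orthogonal to the `i`-th axis. -/
def pairProducts (l : Fin 3 → ℝ) : Fin 3 → ℝ := ![l 1 * l 2, l 0 * l 2, l 0 * l 1]

lemma diagForm_gram (l : Fin 3 → ℝ) (x y : EuclideanSpace ℝ (Fin 3)) :
    diagForm l x x * diagForm l y y - diagForm l x y ^ 2 =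
      ∑ i, (x.ofLp ⨯₃ y.ofLp) i ^ 2 * pairProducts l i := by
  simp only [diagForm_apply, Fin.sum_univ_three, cross_apply, pairProducts, cons_val_zero,
    cons_val_one, cons_val]
  ring

lemma sectCurv_diagForm (l : Fin 3 → ℝ) (x y : EuclideanSpace ℝ (Fin 3)) :
    sectCurv (canonCT fun u v => diagForm l u v) x y =
      Finset.univ.centerMass (fun i => (x.ofLp ⨯₃ y.ofLp) i ^ 2) (pairProducts l) := by
  have hone : pairProducts 1 = 1 := by ext i; fin_cases i <;> simp [pairProducts]
  rw [sectCurv, canonCT_apply_of_symm (diagForm_comm l), inner_eq_diagForm_one,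
    inner_eq_diagForm_one, inner_eq_diagForm_one, diagForm_gram, diagForm_gram, hone,
    Finset.centerMass, div_eq_inv_mul]
  simp only [Pi.one_apply, mul_one, smul_eq_mul]

lemma sectCurvSet_diagForm_subset_convexHull (l : Fin 3 → ℝ) :
    sectCurvSet (diagForm l) ⊆ convexHull ℝ (range (pairProducts l)) := by
  rintro _ ⟨x, y, hxy, rfl⟩
  obtain ⟨i, hi⟩ := Function.ne_iff.1
    (EuclideanSpace.linearIndependent_pair_iff_cross_ne_zero.1 hxy)
  rw [sectCurv_diagForm]
  refine (convex_convexHull ℝ _).centerMass_mem (fun _ _ => sq_nonneg _) ?_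
    (fun i _ => subset_convexHull ℝ _ (mem_range_self i))
  exact Finset.sum_pos' (fun _ _ => sq_nonneg _) ⟨i, Finset.mem_univ i, sq_pos_of_ne_zero hi⟩

lemma segment_subset_sectCurvSet_diagForm (l : Fin 3 → ℝ) :
    segment ℝ (pairProducts l 1) (pairProducts l 2) ⊆ sectCurvSet (diagForm l) := by
  rintro _ ⟨s, t, hs, ht, hst, rfl⟩
  have hcross : (EuclideanSpace.single 0 1 : EuclideanSpace ℝ (Fin 3)).ofLp ⨯₃
      (!₂[0, √t, √s] : EuclideanSpace ℝ (Fin 3)).ofLp = ![0, -√s, √t] := by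
    simp [cross_apply]
  refine ⟨EuclideanSpace.single 0 1, !₂[0, √t, √s], ?_, ?_⟩
  · rw [EuclideanSpace.linearIndependent_pair_iff_cross_ne_zero, hcross]
    intro h
    have hs0 := congrFun h 1
    have ht0 := congrFun h 2
    simp only [cons_val_one, cons_val_zero, cons_val, Pi.zero_apply, neg_eq_zero,
      Real.sqrt_eq_zero hs, Real.sqrt_eq_zero ht] at hs0 ht0
    linarith
  · rw [sectCurv_diagForm, hcross]
    simp [Finset.centerMass, Fin.sum_univ_three, Real.sq_sqrt hs, Real.sq_sqrt ht, hst]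

lemma sectCurvSet_diagForm_eq_Icc {l : Fin 3 → ℝ} {a b : ℝ} (hab : a ≤ b)
    (ha : pairProducts l 1 = a) (hb : pairProducts l 2 = b) (h₀ : pairProducts l 0 ∈ Icc a b) :
    sectCurvSet (diagForm l) = Icc a b := by
  refine ((sectCurvSet_diagForm_subset_convexHull l).trans ?_).antisymm ?_
  · refine convexHull_min (range_subset_iff.2 fun i => ?_) (convex_Icc a b)
    fin_cases i
    · exact h₀
    · exact ⟨ha.ge, ha.le.trans hab⟩
    · exact ⟨hab.trans hb.ge, hb.le⟩
  · rw [← segment_eq_Icc hab, ← ha, ← hb]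
    exact segment_subset_sectCurvSet_diagForm l

lemma exists_pairProducts_eq {a b : ℝ} (hab : a ≤ b) (hb : 0 ≤ b) :
    ∃ l : Fin 3 → ℝ, pairProducts l 1 = a ∧ pairProducts l 2 = b ∧ pairProducts l 0 ∈ Icc a b := by
  rcases hb.eq_or_lt with rfl | hb
  · exact ⟨![1, 0, a], by simp [pairProducts], by simp [pairProducts], by simp [pairProducts, hab]⟩
  · have hsqrt : √b ≠ 0 := (Real.sqrt_pos.2 hb).ne'
    refine ⟨![√b, √b, a / √b], ?_, ?_, ?_⟩ <;>
      simp [pairProducts, mul_div_cancel₀ _ hsqrt, Real.mul_self_sqrt hb.le, hab]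

/-- Every closed interval `[a, b]` with `b ≥ 0` arises as the exact set of sectional
curvature values of `R_φ` for some symmetric bilinear form `φ` on `ℝ³`. -/
theorem exists_canonCT_with_sectional_curvature_interval :
    ∀ a b : ℝ, a ≤ b → 0 ≤ b →
      ∃ φ : EuclideanSpace ℝ (Fin 3) →ₗ[ℝ] EuclideanSpace ℝ (Fin 3) →ₗ[ℝ] ℝ,
        (∀ x y : EuclideanSpace ℝ (Fin 3), φ x y = φ y x) ∧
        {c : ℝ | ∃ x y : EuclideanSpace ℝ (Fin 3), LinearIndependent ℝ ![x, y] ∧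
          c = sectCurv (canonCT (fun u v => φ u v)) x y} = Set.Icc a b := by
  intro a b hab hb
  obtain ⟨l, ha, hb, h₀⟩ := exists_pairProducts_eq hab hb
  exact ⟨diagForm l, diagForm_comm l, sectCurvSet_diagForm_eq_Icc hab ha hb h₀⟩
end
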